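/- arXiv:1506.01742 — 3 statements merged into one kernel-verified Lean document; each statement's English description precedes it below -/
import Mathlib

section
/- Let G be a snake graph with sign function f and let P be a perfect matching of G consisting only of boundary edges. If a and b are edges in P that are both north-or-east boundary edges, or both south-or-west boundary edges, then f(a) = f(b); if one of a, b is a north-or-east boundary edge in P and the other is a south-or-west boundary edge in P, then f(a) = -f(b). -/
/- Combinatorial model of abstract snake graphs and band graphs
   (Canakci–Schiffler, "Snake graph calculus III").
   Tiles are unit squares in the integer grid; a snake graph is a finite
   sequence of tiles, consecutive tiles glued north/south or east/west. -/

open scoped Classical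
open Finset

noncomputable section

abbrev GV := ℤ × ℤ
abbrev GE := Sym2 (ℤ × ℤ)

/-- the south edge of the unit tile whose south-west corner is `p` -/
def south (p : GV) : GE := s(p, p + (1, 0))
/-- the north edge of the unit tile whose south-west corner is `p` -/
def north (p : GV) : GE := s(p + (0, 1), p + (1, 1))
/-- the west edge of the unit tile whose south-west corner is `p` -/
def west (p : GV) : GE := s(p, p + (0, 1))
/-- the east edge of the unit tile whose south-west corner is `p` -/
def east (p : GV) : GE := s(p + (1, 0), p + (1, 1))

def tileVerts (p : GV) : Finset GV := {p, p + (1, 0), p + (0, 1), p + (1, 1)}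
def tileEdges (p : GV) : Finset GE := {south p, north p, west p, east p}

/-- An (abstract) snake graph: a sequence of `d ≥ 1` tiles in the plane,
each consecutive tile glued to the north or to the east of the previous one. -/
structure SnakeGraph where
  d : ℕ
  pos : ℕ → GV
  one_le : 1 ≤ d
  step : ∀ i, i + 1 < d →
    pos (i + 1) = pos i + (0, 1) ∨ pos (i + 1) = pos i + (1, 0)

namespace SnakeGraph
variable (G : SnakeGraph)

def verts : Finset GV := (Finset.range G.d).biUnion fun i => tileVerts (G.pos i)

def edges : Finset GE := (Finset.range G.d).biUnion fun i => tileEdges (G.pos i)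

/-- edges contained in two tiles -/
def interiorEdges : Finset GE := G.edges.filter fun e =>
  ∃ i < G.d, ∃ j < G.d, i ≠ j ∧ e ∈ tileEdges (G.pos i) ∧ e ∈ tileEdges (G.pos j)

def boundaryEdges : Finset GE := G.edges \ G.interiorEdges

/-- a perfect matching: a set of edges covering each vertex exactly once -/
def IsPerfectMatching (M : Finset GE) : Prop :=
  M ⊆ G.edges ∧ ∀ v ∈ G.verts, ∃! e, e ∈ M ∧ v ∈ e

/-- the (finite) set of all perfect matchings of `G` -/
def matchings : Finset (Finset GE) :=
  G.edges.powerset.filter fun M => G.IsPerfectMatching M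

/-- a sign function on the edges of `G` (`true` = `+`, `false` = `-`):
on every tile, north and west agree, south and east agree,
and north is opposite to south. -/
def IsSignFn (f : GE → Bool) : Prop :=
  ∀ i < G.d,
    f (north (G.pos i)) = f (west (G.pos i)) ∧
    f (south (G.pos i)) = f (east (G.pos i)) ∧
    f (north (G.pos i)) ≠ f (south (G.pos i))

/-- the interior edge shared by tiles `i` and `i+1` -/
def sharedEdge (i : ℕ) : GE :=
  if G.pos (i + 1) = G.pos i + (0, 1) then north (G.pos i) else east (G.pos i)

/-- north-or-east boundary edges -/
def NEset : Finset GE := G.boundaryEdges.filter fun e =>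
  ∃ i < G.d, e = north (G.pos i) ∨ e = east (G.pos i)

/-- south-or-west boundary edges -/
def SWset : Finset GE := G.boundaryEdges.filter fun e =>
  ∃ i < G.d, e = south (G.pos i) ∨ e = west (G.pos i)

end SnakeGraph

/-- the horizontal unit edge from `(a, j)` to `(a+1, j)` -/
def hEdge (a j : ℤ) : GE := s(((a, j) : GV), ((a + 1, j) : GV))

/-- Tile `i` is enclosed by the union of cycles `P ∆ Q`: the number of
horizontal edges of `P ∆ Q` lying in the column of tile `i` at height at most
the height of the tile is odd (a planar parity test). -/
def SnakeGraph.encl (G : SnakeGraph) (P Q : Finset GE) (i : ℕ) : Prop :=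
  Odd (((symmDiff P Q).filter fun e =>
    ∃ j : ℤ, j ≤ (G.pos i).2 ∧ e = hEdge (G.pos i).1 j)).card

/-- the rank (height) of a perfect matching `P` relative to the minimal matching `Q`:
the number of tiles enclosed by `P ∆ Q` -/
def SnakeGraph.rank (G : SnakeGraph) (Q P : Finset GE) : ℕ :=
  ((Finset.range G.d).filter fun i => G.encl P Q i).card

/-- The standard sign function on all grid edges; on every snake graph it
restricts to a sign function (the other one being its negation). -/
def stdSign : GE → Bool :=
  Sym2.lift ⟨fun u v =>
    if u.2 = v.2 then decide ((min u.1 v.1 + u.2) % 2 = 0)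
    else decide ((min u.1 v.1 + min u.2 v.2) % 2 = 1),
    by
      intro u v
      rcases eq_or_ne u.2 v.2 with h | h
      · simp [h, min_comm]
      · simp [h, Ne.symm h, min_comm]⟩

/-- An (abstract) band graph: a snake graph together with the choice of a
glueing edge `b` in the south-west of the first tile (`bSouth`) and of the
edge `b'` in the north-east of the last tile (`bNorth`), required to have the
same sign; the band graph itself is the quotient graph identifying `b` and
`b'` (see `glueMap`, `bandVerts`, `bandEdges` below). -/
structure BandGraph where
  G : SnakeGraph
  bSouth : Bool
  bNorth : Bool
  compat :
    stdSign (if bSouth then south (G.pos 0) else west (G.pos 0)) =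
      stdSign (if bNorth then north (G.pos (G.d - 1)) else east (G.pos (G.d - 1)))

namespace BandGraph
variable (B : BandGraph)

/-- the glueing edge `b` of the first tile -/
def bEdge : GE := if B.bSouth then south (B.G.pos 0) else west (B.G.pos 0)
/-- the glueing edge `b'` of the last tile -/
def bEdge' : GE := if B.bNorth then north (B.G.pos (B.G.d - 1)) else east (B.G.pos (B.G.d - 1))

/-- the south-west corner `x` of the first tile (an endpoint of `b`) -/
def xx : GV := B.G.pos 0
/-- the other endpoint `y` of `b` -/
def yy : GV := if B.bSouth then B.G.pos 0 + (1, 0) else B.G.pos 0 + (0, 1)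
/-- the north-east corner `y'` of the last tile (an endpoint of `b'`) -/
def yy' : GV := B.G.pos (B.G.d - 1) + (1, 1)
/-- the other endpoint `x'` of `b'` -/
def xx' : GV := if B.bNorth then B.G.pos (B.G.d - 1) + (0, 1) else B.G.pos (B.G.d - 1) + (1, 0)

def glueStep : GV → GV := fun z => if z = B.xx' then B.xx else if z = B.yy' then B.yy else z

/-- the identification `x' ↦ x`, `y' ↦ y` glueing the snake graph into the band graph -/
def glueMap : GV → GV := fun z => B.glueStep (B.glueStep z)

def bandVerts : Finset GV := B.G.verts.image B.glueMap
def bandEdges : Finset GE := B.G.edges.image (Sym2.map B.glueMap)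
/-- the glueing edge `b = b'` of the band graph -/
def glueEdge : GE := Sym2.map B.glueMap B.bEdge'
/-- the interior edges of the band graph: those of the snake graph plus the glueing edge -/
def bandInteriorEdges : Finset GE :=
  insert B.glueEdge (B.G.interiorEdges.image (Sym2.map B.glueMap))
def bandBoundaryEdges : Finset GE := B.bandEdges \ B.bandInteriorEdges

/-- perfect matchings of the band graph -/
def IsBandPM (M : Finset GE) : Prop :=
  M ⊆ B.bandEdges ∧ ∀ v ∈ B.bandVerts, ∃! e, e ∈ M ∧ v ∈ e

/-- good perfect matchings: those obtained by cutting the band graph along an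
interior edge, i.e. perfect matchings using at least one interior edge. -/
def IsGoodPM (M : Finset GE) : Prop :=
  B.IsBandPM M ∧ ∃ e ∈ B.bandInteriorEdges, e ∈ M

def goodMatchings : Finset (Finset GE) :=
  B.bandEdges.powerset.filter fun M => B.IsGoodPM M

/-- the rank of a good matching `P` relative to a base good matching `Q` -/
def rank (Q P : Finset GE) : ℕ :=
  ((Finset.range B.G.d).filter fun i => B.G.encl P Q i).card

/-- the number of interior edges of the band graph of sign `+` -/
def plusCount : ℕ :=
  ((Finset.range (B.G.d - 1)).filter fun i => stdSign (B.G.sharedEdge i) = true).card +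
    (if stdSign B.bEdge = true then 1 else 0)

/-- the number of interior edges of the band graph of sign `-` -/
def minusCount : ℕ :=
  ((Finset.range (B.G.d - 1)).filter fun i => stdSign (B.G.sharedEdge i) = false).card +
    (if stdSign B.bEdge = false then 1 else 0)

end BandGraph

/-
Put `level (x, y) = x + y`. The boundary edges of a snake graph are the edges of two monotone
lattice paths from the south-west corner of the first tile to the north-east corner of the last
one, and the `k`-th edge of either path joins two consecutive levels. Covering the vertices level
by level, a perfect matching made of boundary edges takes its `k`-th edge from one path for even
`k` and from the other for odd `k`. The sign of the south edge of tile `i` alternates with `i` as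
well, so the xor of these two bits is constant, and it determines the sign of every north or east
edge of the matching and, negated, of every south or west one.
-/

lemma xor_eq_of_alternating {s t : ℕ → Bool} {n : ℕ}
    (hs : ∀ k, k + 1 < n → s (k + 1) = !s k) (ht : ∀ k, k + 1 < n → t (k + 1) = !t k) :
    ∀ k < n, (s k ^^ t k) = (s 0 ^^ t 0)
  | 0, _ => rfl
  | k + 1, hk => by
    rw [hs k hk, ht k hk, Bool.not_xor_not, xor_eq_of_alternating hs ht k (by omega)]

namespace SnakeGraph
variable (G : SnakeGraph)

def level (v : GV) : ℤ := v.1 + v.2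

lemma level_add (p q : GV) : level (p + q) = level p + level q := by
  simp only [level, Prod.fst_add, Prod.snd_add]; ring

/-- The vertex of level `level (pos 0) + k` on the south-east (`c = true`) or the north-west
(`c = false`) boundary path of `G`. -/
def sideVert (c : Bool) : ℕ → GV
  | 0 => G.pos 0
  | k + 1 =>
    if k < G.d then G.pos k + (if c then (1, 0) else (0, 1)) else G.pos (G.d - 1) + (1, 1)

def sideEdge (c : Bool) (k : ℕ) : GE := s(G.sideVert c k, G.sideVert c (k + 1))

lemma sideVert_succ (c : Bool) {k : ℕ} (hk : k < G.d) :
    G.sideVert c (k + 1) = G.pos k + if c then (1, 0) else (0, 1) :=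
  if_pos hk

lemma sideVert_last (c : Bool) : G.sideVert c (G.d + 1) = G.pos (G.d - 1) + (1, 1) :=
  if_neg (lt_irrefl _)

lemma level_pos {i : ℕ} (hi : i < G.d) : level (G.pos i) = level (G.pos 0) + i := by
  induction i with
  | zero => simp
  | succ i ih =>
    rcases G.step i hi with h | h <;>
      rw [h, level_add, ih (by omega)] <;> simp [level] <;> ring

lemma level_sideVert (c : Bool) {k : ℕ} (hk : k ≤ G.d + 1) :
    level (G.sideVert c k) = level (G.pos 0) + k := by
  rcases k with _ | k
  · simp [sideVert]
  · by_cases h : k < G.d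
    · rw [G.sideVert_succ c h, level_add, G.level_pos h]
      cases c <;> simp [level] <;> ring
    · obtain rfl : k = G.d := by omega
      have := G.one_le
      rw [G.sideVert_last, level_add, G.level_pos (by omega)]
      simp [level]
      omega

lemma sideEdge_zero (c : Bool) :
    G.sideEdge c 0 = if c then south (G.pos 0) else west (G.pos 0) := by
  rw [sideEdge, G.sideVert_succ c G.one_le]
  cases c <;> rfl

lemma sideEdge_last (c : Bool) :
    G.sideEdge c G.d = if c then east (G.pos (G.d - 1)) else north (G.pos (G.d - 1)) := by
  obtain ⟨k, hk⟩ := Nat.exists_eq_add_of_le' G.one_le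
  cases c <;> simp [sideEdge, sideVert, hk, east, north]

lemma sideEdge_succ_of_north {k : ℕ} (hk : k + 1 < G.d) (h : G.pos (k + 1) = G.pos k + (0, 1))
    (c : Bool) : G.sideEdge c (k + 1) = if c then east (G.pos k) else west (G.pos (k + 1)) := by
  cases c <;> simp [sideEdge, sideVert, hk, h, east, west, add_assoc, Nat.lt_of_succ_lt hk]

lemma sideEdge_succ_of_east {k : ℕ} (hk : k + 1 < G.d) (h : G.pos (k + 1) = G.pos k + (1, 0))
    (c : Bool) : G.sideEdge c (k + 1) = if c then south (G.pos (k + 1)) else north (G.pos k) := by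
  cases c <;> simp [sideEdge, sideVert, hk, h, south, north, add_assoc, Nat.lt_of_succ_lt hk]

lemma mem_verts_of_mem_tileVerts {i : ℕ} (hi : i < G.d) {v : GV}
    (hv : v ∈ tileVerts (G.pos i)) : v ∈ G.verts :=
  mem_biUnion.mpr ⟨i, mem_range.mpr hi, hv⟩

lemma sideVert_mem_verts (c : Bool) {k : ℕ} (hk : k ≤ G.d + 1) :
    G.sideVert c k ∈ G.verts := by
  have := G.one_le
  rcases k with _ | k
  · exact G.mem_verts_of_mem_tileVerts (i := 0) (by omega) (by simp [sideVert, tileVerts])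
  · by_cases h : k < G.d
    · exact G.mem_verts_of_mem_tileVerts h (by cases c <;> simp [G.sideVert_succ _ h, tileVerts])
    · obtain rfl : k = G.d := by omega
      exact G.mem_verts_of_mem_tileVerts (i := G.d - 1) (by omega)
        (by simp [sideVert_last, tileVerts])

lemma level_of_mem_sideEdge {c : Bool} {k : ℕ} (hk : k ≤ G.d) {v : GV}
    (hv : v ∈ G.sideEdge c k) :
    level v = level (G.pos 0) + k ∨ level v = level (G.pos 0) + k + 1 := by
  rcases Sym2.mem_iff.mp hv with rfl | rfl
  · exact .inl (G.level_sideVert c (by omega))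
  · exact .inr (by rw [G.level_sideVert c (by omega)]; push_cast; ring)

lemma index_eq_of_sideVert_eq {c c' : Bool} {k j : ℕ} (hk : k ≤ G.d + 1) (hj : j ≤ G.d + 1)
    (h : G.sideVert c k = G.sideVert c' j) : k = j := by
  have := congrArg level h
  rw [G.level_sideVert c hk, G.level_sideVert c' hj] at this
  omega

lemma sideVert_succ_injective {k : ℕ} (hk : k < G.d) {c c' : Bool}
    (h : G.sideVert c (k + 1) = G.sideVert c' (k + 1)) : c = c' := by
  rw [G.sideVert_succ c hk, G.sideVert_succ c' hk] at h
  cases c <;> cases c' <;> simp_all [Prod.ext_iff]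

lemma eq_of_sideVert_mem_sideEdge {k j : ℕ} (hk : k < G.d) (hj : j ≤ G.d) {c c' : Bool}
    (h : G.sideVert c (k + 1) ∈ G.sideEdge c' j) : c' = c ∧ (j = k ∨ j = k + 1) := by
  rcases Sym2.mem_iff.mp h with h | h
  · obtain rfl := G.index_eq_of_sideVert_eq (by omega) (by omega) h
    exact ⟨(G.sideVert_succ_injective hk h).symm, .inr rfl⟩
  · obtain rfl : j = k := by have := G.index_eq_of_sideVert_eq (by omega) (by omega) h; omega
    exact ⟨(G.sideVert_succ_injective hk h).symm, .inl rfl⟩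

lemma south_add_up (p : GV) : south (p + (0, 1)) = north p := by
  simp [south, north, add_assoc]

lemma west_add_right (p : GV) : west (p + (1, 0)) = east p := by
  simp [west, east, add_assoc]

lemma eq_of_mem_boundaryEdges {e : GE} (he : e ∈ G.boundaryEdges) {i j : ℕ} (hi : i < G.d)
    (hj : j < G.d) (hei : e ∈ tileEdges (G.pos i)) (hej : e ∈ tileEdges (G.pos j)) : i = j := by
  by_contra hij
  obtain ⟨he, hint⟩ := mem_sdiff.mp he
  exact hint (mem_filter.mpr ⟨he, i, hi, j, hj, hij, hei, hej⟩)

lemma exists_eq_sideEdge_of_mem_boundaryEdges {e : GE} (he : e ∈ G.boundaryEdges) :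
    ∃ c, ∃ k ≤ G.d, e = G.sideEdge c k := by
  obtain ⟨i, hi, hei⟩ : ∃ i < G.d, e ∈ tileEdges (G.pos i) := by
    simpa [edges] using (mem_sdiff.mp he).1
  have once := fun j (hj : j < G.d) (hej : e ∈ tileEdges (G.pos j)) =>
    G.eq_of_mem_boundaryEdges he hi hj hei hej
  simp only [tileEdges, mem_insert, mem_singleton] at hei
  rcases hei with rfl | rfl | rfl | rfl
  · cases i with
    | zero => exact ⟨true, 0, by omega, by simp [sideEdge_zero]⟩
    | succ k =>
      rcases G.step k hi with h | h
      · exact absurd (once k (by omega) (by simp [tileEdges, h, south_add_up])) (by omega)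
      · exact ⟨true, k + 1, hi.le, by simp [G.sideEdge_succ_of_east hi h]⟩
  · by_cases hlt : i + 1 < G.d
    · rcases G.step i hlt with h | h
      · exact absurd (once (i + 1) hlt (by simp [tileEdges, h, south_add_up])) (by omega)
      · exact ⟨false, i + 1, hlt.le, by simp [G.sideEdge_succ_of_east hlt h]⟩
    · obtain rfl : i = G.d - 1 := by omega
      exact ⟨false, G.d, le_rfl, by simp [sideEdge_last]⟩
  · cases i with
    | zero => exact ⟨false, 0, by omega, by simp [sideEdge_zero]⟩
    | succ k =>
      rcases G.step k hi with h | h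
      · exact ⟨false, k + 1, hi.le, by simp [G.sideEdge_succ_of_north hi h]⟩
      · exact absurd (once k (by omega) (by simp [tileEdges, h, west_add_right])) (by omega)
  · by_cases hlt : i + 1 < G.d
    · rcases G.step i hlt with h | h
      · exact ⟨true, i + 1, hlt.le, by simp [G.sideEdge_succ_of_north hlt h]⟩
      · exact absurd (once (i + 1) hlt (by simp [tileEdges, h, west_add_right])) (by omega)
    · obtain rfl : i = G.d - 1 := by omega
      exact ⟨true, G.d, le_rfl, by simp [sideEdge_last]⟩

variable {G} {P : Finset GE}

lemma IsPerfectMatching.eq_of_mem (hP : G.IsPerfectMatching P) {v : GV} (hv : v ∈ G.verts)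
    {e₁ e₂ : GE} (h₁ : e₁ ∈ P) (hv₁ : v ∈ e₁) (h₂ : e₂ ∈ P) (hv₂ : v ∈ e₂) : e₁ = e₂ :=
  (hP.2 v hv).unique ⟨h₁, hv₁⟩ ⟨h₂, hv₂⟩

lemma exists_sideEdge_zero_mem (hP : G.IsPerfectMatching P) (hPb : P ⊆ G.boundaryEdges) :
    ∃ c, G.sideEdge c 0 ∈ P ∧ G.sideEdge (!c) 0 ∉ P := by
  have hv := G.sideVert_mem_verts true (k := 0) (by omega)
  obtain ⟨e, ⟨heP, hev⟩, -⟩ := hP.2 _ hv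
  obtain ⟨c, k, hk, rfl⟩ := G.exists_eq_sideEdge_of_mem_boundaryEdges (hPb heP)
  obtain rfl : k = 0 := by
    have := G.level_of_mem_sideEdge hk hev
    rw [G.level_sideVert true (by omega)] at this
    omega
  refine ⟨c, heP, fun h => ?_⟩
  have heq := hP.eq_of_mem hv heP hev h (Sym2.mem_mk_left _ _)
  have hmem : G.sideVert c 1 ∈ G.sideEdge (!c) 0 := heq ▸ Sym2.mem_mk_right _ _
  have := (G.eq_of_sideVert_mem_sideEdge (k := 0) G.one_le (by omega) hmem).1
  cases c <;> simp at this

theorem exists_alternating_sides (hP : G.IsPerfectMatching P) (hPb : P ⊆ G.boundaryEdges) :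
    ∃ s : ℕ → Bool, (∀ k, s (k + 1) = !s k) ∧
      ∀ k ≤ G.d, G.sideEdge (s k) k ∈ P ∧ G.sideEdge (!s k) k ∉ P := by
  obtain ⟨c, h₀, h₀'⟩ := exists_sideEdge_zero_mem hP hPb
  refine ⟨fun k => c ^^ k.bodd, fun k => by simp [Nat.bodd_succ], fun k hk => ?_⟩
  induction k with
  | zero => simpa using ⟨h₀, h₀'⟩
  | succ k ih =>
    obtain ⟨hin, hout⟩ := ih (by omega)
    dsimp only at hin hout ⊢
    simp only [Nat.bodd_succ, Bool.xor_not, Bool.not_not]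
    generalize (c ^^ k.bodd) = b at hin hout ⊢
    constructor
    · obtain ⟨e, ⟨heP, hev⟩, -⟩ :=
        hP.2 _ (G.sideVert_mem_verts (!b) (k := k + 1) (by omega))
      obtain ⟨c', j, hj, rfl⟩ := G.exists_eq_sideEdge_of_mem_boundaryEdges (hPb heP)
      obtain ⟨rfl, rfl | rfl⟩ := G.eq_of_sideVert_mem_sideEdge (by omega) hj hev
      · exact absurd heP hout
      · exact heP
    · intro h
      have heq := hP.eq_of_mem (G.sideVert_mem_verts b (k := k + 1) (by omega)) hin
        (Sym2.mem_mk_right _ _) h (Sym2.mem_mk_left _ _)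
      have hmem : G.sideVert b k ∈ G.sideEdge b (k + 1) := heq ▸ Sym2.mem_mk_left _ _
      have := G.level_of_mem_sideEdge hk hmem
      rw [G.level_sideVert b (by omega)] at this
      omega

lemma side_eq_not_of_mem_of_level_eq_add_two {s : ℕ → Bool} (hP : G.IsPerfectMatching P)
    (hs : ∀ k ≤ G.d, G.sideEdge (s k) k ∈ P) {e : GE} (he : e ∈ P) {k : ℕ} (hk : k < G.d)
    {c : Bool} (hc : G.sideVert c (k + 1) ∈ e) {w : GV} (hw : w ∈ e)
    (hlev : level w = level (G.pos 0) + k + 2) : s k = !c := by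
  refine Bool.eq_not.mpr fun h => ?_
  have heq := hP.eq_of_mem (G.sideVert_mem_verts c (by omega)) he hc (hs k hk.le)
    (h ▸ Sym2.mem_mk_right _ _)
  have := G.level_of_mem_sideEdge hk.le (heq ▸ hw)
  omega

lemma side_eq_of_mem_of_level_eq {s : ℕ → Bool} (hP : G.IsPerfectMatching P)
    (hs_succ : ∀ k, s (k + 1) = !s k) (hs : ∀ k ≤ G.d, G.sideEdge (s k) k ∈ P) {e : GE}
    (he : e ∈ P) {k : ℕ} (hk : k < G.d) {c : Bool} (hc : G.sideVert c (k + 1) ∈ e) {w : GV}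
    (hw : w ∈ e) (hlev : level w = level (G.pos 0) + k) : s k = c := by
  by_contra h
  have hsucc : s (k + 1) = c := (hs_succ k).trans (Bool.eq_not.mpr (Ne.symm h)).symm
  have heq := hP.eq_of_mem (G.sideVert_mem_verts c (by omega)) he hc (hs (k + 1) hk)
    (hsucc ▸ Sym2.mem_mk_left _ _)
  have := G.level_of_mem_sideEdge hk (heq ▸ hw)
  omega

namespace IsSignFn
variable {f : GE → Bool} {i : ℕ}

lemma north_eq (hf : G.IsSignFn f) (hi : i < G.d) : f (north (G.pos i)) = !f (south (G.pos i)) :=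
  Bool.eq_not.mpr (hf i hi).2.2

lemma west_eq (hf : G.IsSignFn f) (hi : i < G.d) : f (west (G.pos i)) = !f (south (G.pos i)) :=
  (hf i hi).1 ▸ hf.north_eq hi

lemma east_eq (hf : G.IsSignFn f) (hi : i < G.d) : f (east (G.pos i)) = f (south (G.pos i)) :=
  (hf i hi).2.1.symm

lemma south_succ (hf : G.IsSignFn f) (hi : i + 1 < G.d) :
    f (south (G.pos (i + 1))) = !f (south (G.pos i)) := by
  rcases G.step i hi with h | h
  · rw [h, south_add_up, hf.north_eq (by omega)]
  · have := hf.west_eq hi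
    rw [h, west_add_right, hf.east_eq (by omega)] at this
    rw [h, this, Bool.not_not]

end IsSignFn

theorem exists_sign_of_boundary_matching {f : GE → Bool} (hf : G.IsSignFn f)
    (hP : G.IsPerfectMatching P) (hPb : P ⊆ G.boundaryEdges) :
    ∃ κ, ∀ a ∈ P, (a ∈ G.NEset → f a = κ) ∧ (a ∈ G.SWset → f a = !κ) := by
  obtain ⟨s, hs_succ, hs⟩ := exists_alternating_sides hP hPb
  have hsP := fun k hk => (hs k hk).1
  have hconst := xor_eq_of_alternating (n := G.d) (t := fun k => f (south (G.pos k)))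
    (fun k _ => hs_succ k) (fun k hk => hf.south_succ hk)
  have hlev (i : ℕ) (hi : i < G.d) (q : GV) :
      level (G.pos i + q) = level (G.pos 0) + i + level q := by
    rw [level_add, G.level_pos hi]
  refine ⟨s 0 ^^ f (south (G.pos 0)), fun a ha => ⟨fun hNE => ?_, fun hSW => ?_⟩⟩
  · obtain ⟨i, hi, rfl | rfl⟩ := (mem_filter.mp hNE).2
    · have := side_eq_not_of_mem_of_level_eq_add_two hP hsP ha hi (c := false)
        (by simp [north, G.sideVert_succ _ hi]) (Sym2.mem_mk_right _ _)
        (by rw [hlev i hi]; simp [level])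
      rw [← hconst i hi, this, hf.north_eq hi]; simp
    · have := side_eq_not_of_mem_of_level_eq_add_two hP hsP ha hi (c := true)
        (by simp [east, G.sideVert_succ _ hi]) (Sym2.mem_mk_right _ _)
        (by rw [hlev i hi]; simp [level])
      rw [← hconst i hi, this, hf.east_eq hi]; simp
  · obtain ⟨i, hi, rfl | rfl⟩ := (mem_filter.mp hSW).2
    · have := side_eq_of_mem_of_level_eq hP hs_succ hsP ha hi (c := true)
        (by simp [south, G.sideVert_succ _ hi]) (Sym2.mem_mk_left _ _) (G.level_pos hi)
      rw [← hconst i hi, this]; simp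
    · have := side_eq_of_mem_of_level_eq hP hs_succ hsP ha hi (c := false)
        (by simp [west, G.sideVert_succ _ hi]) (Sym2.mem_mk_left _ _) (G.level_pos hi)
      rw [← hconst i hi, this, hf.west_eq hi]; simp

end SnakeGraph

/-- for a boundary perfect matching `P` and a sign function `f`:
two edges of `P` both in NE or both in SW have the same sign; one in NE and
one in SW have opposite signs. -/
theorem sign_on_boundary_matching (G : SnakeGraph) (f : GE → Bool)
    (hf : G.IsSignFn f) (P : Finset GE) (hP : G.IsPerfectMatching P)
    (hPb : P ⊆ G.boundaryEdges) (a b : GE) (ha : a ∈ P) (hb : b ∈ P) :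
    (((a ∈ G.NEset ∧ b ∈ G.NEset) ∨ (a ∈ G.SWset ∧ b ∈ G.SWset)) → f a = f b) ∧
    ((a ∈ G.NEset ∧ b ∈ G.SWset) → f a ≠ f b) := by
  obtain ⟨κ, hκ⟩ := G.exists_sign_of_boundary_matching hf hP hPb
  refine ⟨?_, fun ⟨haNE, hbSW⟩ => ?_⟩
  · rintro (⟨haNE, hbNE⟩ | ⟨haSW, hbSW⟩)
    · rw [(hκ a ha).1 haNE, (hκ b hb).1 hbNE]
    · rw [(hκ a ha).2 haSW, (hκ b hb).2 hbSW]
  · rw [(hκ a ha).1 haNE, (hκ b hb).2 hbSW]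
    exact Bool.ne_not.mpr rfl
end
end

section
/- Every unlabeled snake graph is geometric and unpunctured: for every snake graph G there exists a triangulated polygon (disk with marked points on the boundary) and an arc γ in it whose associated snake graph equals G. Specifically, a snake graph with d tiles can be realised by an arc in a polygon with d + 3 vertices. -/
/- Combinatorial model of abstract snake graphs and band graphs
   (Canakci–Schiffler, "Snake graph calculus III").
   Tiles are unit squares in the integer grid; a snake graph is a finite
   sequence of tiles, consecutive tiles glued north/south or east/west. -/

open scoped Classical
open Finset

noncomputable section

/- Combinatorial model of a triangulated convex polygon with vertex set
`Fin n` in counterclockwise cyclic order, and of an arc between two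
boundary vertices together with its sequence of crossings. -/

/-- cyclic distance from `a` to `x` going counterclockwise -/
def cdist (n : ℕ) (a x : Fin n) : ℕ := (x.val + n - a.val) % n

/-- `x` lies strictly between `a` and `b` counterclockwise -/
def CycBtw (n : ℕ) (a x b : Fin n) : Prop := 0 < cdist n a x ∧ cdist n a x < cdist n a b

/-- the chord from `a` to `b` crosses the chord `e` -/
def ChordCrosses (n : ℕ) (a b : Fin n) (e : Fin n × Fin n) : Prop :=
  (CycBtw n a e.1 b ∧ CycBtw n b e.2 a) ∨ (CycBtw n a e.2 b ∧ CycBtw n b e.1 a)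

/-- `e` is a diagonal: its endpoints are distinct and non-adjacent -/
def IsDiagonal (n : ℕ) (e : Fin n × Fin n) : Prop :=
  cdist n e.1 e.2 ≠ 0 ∧ cdist n e.1 e.2 ≠ 1 ∧ cdist n e.2 e.1 ≠ 1

/-- `e` and `f` are the same chord (as unordered pairs) -/
def SameChord (n : ℕ) (e f : Fin n × Fin n) : Prop :=
  (e.1 = f.1 ∧ e.2 = f.2) ∨ (e.1 = f.2 ∧ e.2 = f.1)

/-- a triangulation of the convex `n`-gon: `n - 3` pairwise noncrossing,
pairwise distinct diagonals (a maximal such collection) -/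
def IsTriangulation (n : ℕ) (T : Finset (Fin n × Fin n)) : Prop :=
  T.card = n - 3 ∧ (∀ e ∈ T, IsDiagonal n e) ∧
    (∀ e ∈ T, ∀ f ∈ T, ¬ ChordCrosses n e.1 e.2 f) ∧
    (∀ e ∈ T, ∀ f ∈ T, SameChord n e f → e = f)

/-- the tiles `j, j+1, j+2` of a snake graph form a straight piece -/
def StraightAt (G : SnakeGraph) (j : ℕ) : Prop :=
  G.pos (j + 1) - G.pos j = G.pos (j + 2) - G.pos (j + 1)

/-- `PolygonRealises n T a b seq G` : in the triangulated `n`-gon `(Fin n, T)`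
the arc from `a` to `b` crosses exactly the diagonals `seq 0, …, seq (d-1)`,
in this order (each recorded with its first endpoint on the left of the arc),
and the zigzag/straight pattern of the crossing sequence matches the snake
graph `G`; i.e. the snake graph associated to the arc `(a, b)` is `G`
(up to the reflection symmetry of snake graphs). -/
def PolygonRealises (n : ℕ) (T : Finset (Fin n × Fin n)) (a b : Fin n)
    (seq : ℕ → Fin n × Fin n) (G : SnakeGraph) : Prop :=
  IsTriangulation n T ∧ a ≠ b ∧
  -- the seq j are distinct diagonals of T crossed by the arc,
  -- the first endpoint on the left side, the second on the right side
  (∀ j < G.d, seq j ∈ T ∧ CycBtw n a (seq j).1 b ∧ CycBtw n b (seq j).2 a) ∧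
  (∀ j < G.d, ∀ k < G.d, j ≠ k → ¬ SameChord n (seq j) (seq k)) ∧
  -- every diagonal of T crossed by the arc occurs in the sequence
  (∀ e ∈ T, ChordCrosses n a b e → ∃ j < G.d, SameChord n (seq j) e) ∧
  -- the diagonals are listed in the order in which the arc crosses them:
  -- no endpoint of the next diagonal is strictly inside the region cut off
  -- by the previous one on the side of `a`
  (∀ j, j + 1 < G.d →
    (¬ CycBtw n (seq j).2 (seq (j + 1)).1 (seq j).1 ∨ (seq (j + 1)).1 = (seq j).1) ∧
    (¬ CycBtw n (seq j).2 (seq (j + 1)).2 (seq j).1 ∨ (seq (j + 1)).2 = (seq j).2)) ∧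
  -- consecutive crossed diagonals share a vertex (the pivot)
  (∀ j, j + 1 < G.d → ∃ w : Fin n,
    (w = (seq j).1 ∨ w = (seq j).2) ∧ (w = (seq (j + 1)).1 ∨ w = (seq (j + 1)).2)) ∧
  -- shape condition: three consecutive tiles of `G` are straight exactly when
  -- the two consecutive pivots lie on opposite sides of the arc
  (∀ j, j + 2 < G.d → ∀ w w' : Fin n,
    ((w = (seq j).1 ∨ w = (seq j).2) ∧ (w = (seq (j + 1)).1 ∨ w = (seq (j + 1)).2)) →
    ((w' = (seq (j + 1)).1 ∨ w' = (seq (j + 1)).2) ∧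
      (w' = (seq (j + 2)).1 ∨ w' = (seq (j + 2)).2)) →
    (StraightAt G j ↔ ¬ (CycBtw n a w b ↔ CycBtw n a w' b)))

/-! Realise the snake graph in the `(d + 3)`-gon with vertices `0, …, d + 2` by an arc from `0`
through a zigzag fan of diagonals: the first is `(1, d + 2)`, and each next one pivots about an
endpoint of the previous one, moving the other endpoint one step towards the far end `b` of the
arc. These `d` diagonals are pairwise nested, so they do not cross and form a triangulation, and
the arc crosses exactly them. Straight pieces of `G` must correspond to consecutive pivots on
opposite sides of the arc, and zigzags to pivots on the same side; this determines the pivot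
sides recursively along `G`. -/

section CyclicOrder

variable {n : ℕ}

lemma cdist_of_le {a x : Fin n} (h : a ≤ x) : cdist n a x = x - a := by
  rw [cdist, show (x : ℕ) + n - a = x - a + n by omega, Nat.add_mod_right,
    Nat.mod_eq_of_lt (by omega)]

lemma cdist_of_lt {a x : Fin n} (h : x < a) : cdist n a x = x + n - a :=
  Nat.mod_eq_of_lt (by omega)

lemma cycBtw_iff_of_le {a x b : Fin n} (hab : a ≤ b) : CycBtw n a x b ↔ a < x ∧ x < b := by
  rw [CycBtw, cdist_of_le hab]
  rcases le_or_gt a x with hax | hxa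
  · rw [cdist_of_le hax]; omega
  · rw [cdist_of_lt hxa]; omega

lemma cycBtw_iff_of_lt {a x b : Fin n} (hba : b < a) : CycBtw n a x b ↔ a < x ∨ x < b := by
  rw [CycBtw, cdist_of_lt hba]
  rcases le_or_gt a x with hax | hxa
  · rw [cdist_of_le hax]; omega
  · rw [cdist_of_lt hxa]; omega

lemma not_cycBtw_of_mem_Icc {l x r : Fin n} (hx : x ∈ Set.Icc l r) (hlr : l < r) :
    ¬ CycBtw n r x l := by
  rw [cycBtw_iff_of_lt hlr]
  exact fun h => h.elim hx.2.not_gt hx.1.not_gt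

lemma not_chordCrosses_of_nested {l r l' r' : Fin n} (hlr : l < r) (hlr' : l' < r')
    (hnest : l ≤ l' ∧ r' ≤ r ∨ l' ≤ l ∧ r ≤ r') : ¬ ChordCrosses n l r (l', r') := by
  simp only [ChordCrosses, cycBtw_iff_of_le hlr.le, cycBtw_iff_of_lt hlr]
  omega

lemma isDiagonal_of_lt {l r : Fin n} (hl : 0 < (l : ℕ)) (hlr : (l : ℕ) + 1 < r) :
    IsDiagonal n (l, r) := by
  simp only [IsDiagonal, cdist_of_le (show l ≤ r by omega), cdist_of_lt (show l < r by omega)]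
  omega

lemma sameChord_iff_eq {e f : Fin n × Fin n} (he : e.1 < e.2) (hf : f.1 < f.2) :
    SameChord n e f ↔ e = f := by
  rw [SameChord, Prod.ext_iff]
  constructor
  · rintro (h | ⟨h₁, h₂⟩)
    · exact h
    · exact absurd (h₁ ▸ h₂ ▸ he) (lt_asymm hf)
  · exact Or.inl

end CyclicOrder

namespace FanTriangulation

/- `s j = true` means that the diagonals `j` and `j + 1` share their left endpoint; otherwise they
share the right one. The width `rightEnd d s j - leftEnd s j = d + 1 - j` drops by one per step. -/
def leftEnd (s : ℕ → Bool) : ℕ → ℕ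
  | 0 => 1
  | j + 1 => if s j then leftEnd s j else leftEnd s j + 1

def rightEnd (d : ℕ) (s : ℕ → Bool) (j : ℕ) : ℕ := leftEnd s j + (d + 1 - j)

def diag (d : ℕ) (s : ℕ → Bool) (j : ℕ) : Fin (d + 3) × Fin (d + 3) :=
  (Fin.ofNat _ (leftEnd s j), Fin.ofNat _ (rightEnd d s j))

def fan (d : ℕ) (s : ℕ → Bool) : Finset (Fin (d + 3) × Fin (d + 3)) :=
  (range d).image (diag d s)

def endpoint (d : ℕ) (s : ℕ → Bool) : Fin (d + 3) := Fin.ofNat _ (leftEnd s (d - 1) + 1)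

def pivot (d : ℕ) (s : ℕ → Bool) (j : ℕ) : Fin (d + 3) :=
  if s j then (diag d s j).1 else (diag d s j).2

variable {d : ℕ} {s : ℕ → Bool}

lemma leftEnd_succ_le (s : ℕ → Bool) (j : ℕ) : leftEnd s (j + 1) ≤ leftEnd s j + 1 := by
  simp only [leftEnd]; split <;> omega

lemma leftEnd_mono (s : ℕ → Bool) : Monotone (leftEnd s) :=
  monotone_nat_of_le_succ fun j => by simp only [leftEnd]; split <;> omega

lemma leftEnd_le_add (s : ℕ → Bool) {j k : ℕ} (hjk : j ≤ k) :
    leftEnd s k ≤ leftEnd s j + (k - j) := by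
  induction k, hjk using Nat.le_induction with
  | base => simp
  | succ k hjk ih => have := leftEnd_succ_le s k; omega

lemma leftEnd_le (s : ℕ → Bool) (j : ℕ) : leftEnd s j ≤ j + 1 :=
  (leftEnd_le_add s (Nat.zero_le j)).trans_eq (by simp [leftEnd, add_comm])

lemma val_diag_fst (hj : j < d) : ((diag d s j).1 : ℕ) = leftEnd s j := by
  rw [diag, Fin.val_ofNat]
  exact Nat.mod_eq_of_lt (by have := leftEnd_le s j; omega)

lemma val_diag_snd (hj : j < d) : ((diag d s j).2 : ℕ) = rightEnd d s j := by
  rw [diag, Fin.val_ofNat, rightEnd]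
  exact Nat.mod_eq_of_lt (by have := leftEnd_le s j; omega)

lemma val_endpoint : (endpoint d s : ℕ) = leftEnd s (d - 1) + 1 := by
  rw [endpoint, Fin.val_ofNat]
  exact Nat.mod_eq_of_lt (by have := leftEnd_le s (d - 1); omega)

lemma diag_bounds (hj : j < d) :
    0 < (diag d s j).1 ∧ (diag d s j).1 < endpoint d s ∧ endpoint d s < (diag d s j).2 := by
  have h₁ : 1 ≤ leftEnd s j := leftEnd_mono s (Nat.zero_le j)
  have h₂ := leftEnd_mono s (show j ≤ d - 1 by omega)
  have h₃ := leftEnd_le_add s (show j ≤ d - 1 by omega)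
  simp only [Fin.lt_def, Fin.val_zero, val_diag_fst hj, val_diag_snd hj, val_endpoint, rightEnd]
  omega

lemma diag_nested {j k : ℕ} (hjk : j ≤ k) (hk : k < d) :
    (diag d s j).1 ≤ (diag d s k).1 ∧ (diag d s k).2 ≤ (diag d s j).2 := by
  have h₁ := leftEnd_mono s hjk
  have h₂ := leftEnd_le_add s hjk
  simp only [Fin.le_def, val_diag_fst hk, val_diag_fst (hjk.trans_lt hk), val_diag_snd hk,
    val_diag_snd (hjk.trans_lt hk), rightEnd]
  omega

lemma endpoint_ne_zero : endpoint d s ≠ 0 := by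
  simp [Fin.ext_iff, val_endpoint]

lemma diag_fst_lt_snd (hj : j < d) : (diag d s j).1 < (diag d s j).2 :=
  (diag_bounds hj).2.1.trans (diag_bounds hj).2.2

lemma diag_injOn : Set.InjOn (diag d s) (range d) := by
  intro j hj k hk h
  simp only [coe_range, Set.mem_Iio] at hj hk
  have h₁ := congrArg (fun e => (e.1 : ℕ)) h
  have h₂ := congrArg (fun e => (e.2 : ℕ)) h
  simp only [val_diag_fst hj, val_diag_fst hk, val_diag_snd hj, val_diag_snd hk,
    rightEnd] at h₁ h₂
  omega

lemma isTriangulation_fan : IsTriangulation (d + 3) (fan d s) := by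
  refine ⟨?_, ?_, ?_, ?_⟩
  · rw [fan, card_image_of_injOn diag_injOn, card_range]; rfl
  · simp only [fan, forall_mem_image, mem_range]
    intro j hj
    obtain ⟨h₀, h₁, h₂⟩ := diag_bounds (s := s) hj
    exact isDiagonal_of_lt (l := (diag d s j).1) (r := (diag d s j).2) h₀ (by omega)
  · simp only [fan, forall_mem_image, mem_range]
    intro j hj k hk
    refine not_chordCrosses_of_nested (diag_fst_lt_snd hj) (diag_fst_lt_snd hk) ?_
    rcases le_total j k with hjk | hkj
    · exact Or.inl (diag_nested hjk hk)
    · exact Or.inr (diag_nested hkj hj)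
  · simp only [fan, forall_mem_image, mem_range]
    exact fun j hj k hk => (sameChord_iff_eq (diag_fst_lt_snd hj) (diag_fst_lt_snd hk)).mp

lemma not_sameChord_diag {j k : ℕ} (hj : j < d) (hk : k < d) (hjk : j ≠ k) :
    ¬ SameChord (d + 3) (diag d s j) (diag d s k) := by
  rw [sameChord_iff_eq (diag_fst_lt_snd hj) (diag_fst_lt_snd hk)]
  exact fun h => hjk (diag_injOn (by simpa using hj) (by simpa using hk) h)

lemma not_cycBtw_diag {j k : ℕ} (hjk : j ≤ k) (hk : k < d) :
    ¬ CycBtw (d + 3) (diag d s j).2 (diag d s k).1 (diag d s j).1 ∧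
      ¬ CycBtw (d + 3) (diag d s j).2 (diag d s k).2 (diag d s j).1 := by
  obtain ⟨hl, hr⟩ := diag_nested (s := s) hjk hk
  have hk' := diag_fst_lt_snd (s := s) hk
  exact ⟨not_cycBtw_of_mem_Icc ⟨hl, hk'.le.trans hr⟩ (diag_fst_lt_snd (hjk.trans_lt hk)),
    not_cycBtw_of_mem_Icc ⟨hl.trans hk'.le, hr⟩ (diag_fst_lt_snd (hjk.trans_lt hk))⟩

lemma crossed_diag (hj : j < d) :
    CycBtw (d + 3) 0 (diag d s j).1 (endpoint d s) ∧
      CycBtw (d + 3) (endpoint d s) (diag d s j).2 0 := by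
  obtain ⟨h₀, h₁, h₂⟩ := diag_bounds (s := s) hj
  rw [cycBtw_iff_of_le (Fin.zero_le _), cycBtw_iff_of_lt (h₀.trans h₁)]
  exact ⟨⟨h₀, h₁⟩, Or.inl h₂⟩

lemma val_diag_succ (hj : j + 1 < d) :
    ((diag d s (j + 1)).1 : ℕ) = (diag d s j).1 + (if s j then 0 else 1) ∧
      ((diag d s (j + 1)).2 : ℕ) + (if s j then 1 else 0) = (diag d s j).2 := by
  simp only [val_diag_fst hj, val_diag_snd hj, val_diag_fst (show j < d by omega),
    val_diag_snd (show j < d by omega), rightEnd, leftEnd]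
  split <;> omega

lemma shares_endpoint_iff_eq_pivot (hj : j + 1 < d) {w : Fin (d + 3)} :
    ((w = (diag d s j).1 ∨ w = (diag d s j).2) ∧
      (w = (diag d s (j + 1)).1 ∨ w = (diag d s (j + 1)).2)) ↔ w = pivot d s j := by
  obtain ⟨-, h₁, h₂⟩ := diag_bounds (s := s) (show j < d by omega)
  obtain ⟨-, h₁', h₂'⟩ := diag_bounds (s := s) hj
  obtain ⟨hl, hr⟩ := val_diag_succ (s := s) hj
  simp only [pivot, Fin.ext_iff, Fin.lt_def] at h₁ h₂ h₁' h₂' ⊢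
  cases hs : s j <;> simp only [hs, Bool.false_eq_true, if_true, if_false] at hl hr ⊢ <;> omega

lemma cycBtw_pivot_iff (hj : j < d) :
    CycBtw (d + 3) 0 (pivot d s j) (endpoint d s) ↔ s j = true := by
  obtain ⟨h₀, h₁, h₂⟩ := diag_bounds (s := s) hj
  rw [cycBtw_iff_of_le (Fin.zero_le _), pivot]
  cases s j
  · simp only [Bool.false_eq_true, if_false, iff_false, not_and, not_lt]
    exact fun _ => h₂.le
  · simp only [if_true, iff_true]
    exact ⟨h₀, h₁⟩

end FanTriangulation

namespace SnakeGraph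

variable (G : SnakeGraph)

def stepsNorth (j : ℕ) : Bool := decide (G.pos (j + 1) = G.pos j + (0, 1))

/-- `true` when the pivot between tiles `j` and `j + 1` lies to the left of the arc. -/
def pivotSide : ℕ → Bool
  | 0 => true
  | j + 1 => if G.stepsNorth j = G.stepsNorth (j + 1) then !pivotSide j else pivotSide j

variable {G}

lemma straightAt_iff_stepsNorth_eq {j : ℕ} (hj : j + 2 < G.d) :
    StraightAt G j ↔ G.stepsNorth j = G.stepsNorth (j + 1) := by
  rcases G.step j (by omega) with h₁ | h₁ <;> rcases G.step (j + 1) (by omega) with h₂ | h₂ <;>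
    simp [StraightAt, stepsNorth, h₁, h₂, Prod.ext_iff]

lemma straightAt_iff_pivotSide_ne {j : ℕ} (hj : j + 2 < G.d) :
    StraightAt G j ↔ G.pivotSide (j + 1) ≠ G.pivotSide j := by
  rw [straightAt_iff_stepsNorth_eq hj, pivotSide]
  split <;> simp [*]

end SnakeGraph

open FanTriangulation SnakeGraph in
/-- every unlabeled snake graph is geometric and unpunctured:
a snake graph with `d` tiles is the snake graph of an arc in a triangulated
polygon with `d + 3` vertices. -/
theorem snake_realizable_in_polygon (G : SnakeGraph) :
    ∃ (T : Finset (Fin (G.d + 3) × Fin (G.d + 3))) (a b : Fin (G.d + 3))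
      (seq : ℕ → Fin (G.d + 3) × Fin (G.d + 3)),
      PolygonRealises (G.d + 3) T a b seq G := by
  refine ⟨fan G.d G.pivotSide, 0, endpoint G.d G.pivotSide, diag G.d G.pivotSide,
    isTriangulation_fan, endpoint_ne_zero.symm,
    fun j hj => ⟨mem_image_of_mem _ (mem_range.mpr hj), crossed_diag hj⟩,
    fun j hj k hk => not_sameChord_diag hj hk, ?_, fun j hj => ?_,
    fun j hj => ⟨_, (shares_endpoint_iff_eq_pivot hj).mpr rfl⟩, ?_⟩
  · simp only [fan, forall_mem_image, mem_range]
    exact fun j hj _ => ⟨j, hj, Or.inl ⟨rfl, rfl⟩⟩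
  · obtain ⟨h₁, h₂⟩ := not_cycBtw_diag (s := G.pivotSide) (Nat.le_succ j) hj
    exact ⟨Or.inl h₁, Or.inl h₂⟩
  · intro j hj w w' hw hw'
    rw [(shares_endpoint_iff_eq_pivot (by omega)).mp hw, (shares_endpoint_iff_eq_pivot hj).mp hw',
      cycBtw_pivot_iff (by omega), cycBtw_pivot_iff (by omega), straightAt_iff_pivotSide_ne hj]
    cases G.pivotSide j <;> cases G.pivotSide (j + 1) <;> simp
end
end

section
/- Let f_d ∈ ℤ[y] be defined by f_0 = 1, f_1 = y + 1, and f_d = y·f_{d-1} + f_{d-2} if d is even, f_d = f_{d-1} + y²·f_{d-2} if d is odd. Then f_d is the rank generating function of the lattice of perfect matchings of the straight snake graph with d tiles (whose first interior edge has sign +); in particular, f_d evaluated at y = 1 equals the (d+2)-nd Fibonacci number. -/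
/- Combinatorial model of abstract snake graphs and band graphs
   (Canakci–Schiffler, "Snake graph calculus III").
   Tiles are unit squares in the integer grid; a snake graph is a finite
   sequence of tiles, consecutive tiles glued north/south or east/west. -/

open scoped Classical
open Finset

noncomputable section

/-- the straight snake graph with `d` tiles, all in one row -/
def straightSnake (d : ℕ) (hd : 1 ≤ d) : SnakeGraph where
  d := d
  pos := fun i => ((i : ℤ), 0)
  one_le := hd
  step := fun i _ => Or.inr (by simp [Prod.ext_iff])

/-- the polynomials `f_d`: `f_0 = 1`, `f_1 = y + 1`,
`f_d = y f_{d-1} + f_{d-2}` for even `d`, `f_d = f_{d-1} + y² f_{d-2}` for odd `d` -/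
def fpoly : ℕ → Polynomial ℤ
  | 0 => 1
  | 1 => Polynomial.X + 1
  | n + 2 =>
    if (n + 2) % 2 = 0 then Polynomial.X * fpoly (n + 1) + fpoly n
    else fpoly (n + 1) + Polynomial.X ^ 2 * fpoly n

/-!
A perfect matching of the straight snake graph (a `2 × d` ladder) is determined by the set `D` of
tiles whose two horizontal edges it uses: `D` is any subset of `{0, …, d-1}` without two
consecutive elements, and vertical edges cover the remaining vertices. A tile is enclosed by
`P ∆ Q` exactly when it lies in `D(P) ∆ D(Q)`, and the boundary matching through the west edge of
the first tile has `D = {odd tiles}`. So the rank generating function is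
`∑_D y ^ |D ∆ odds|`; splitting by whether `D` contains the last tile gives the
parity-dependent recurrence of `f_d`, which at `y = 1` is the Fibonacci recurrence.
-/

open Polynomial

namespace Finset

variable {α : Type*} [DecidableEq α] {a : α} {s t : Finset α}

theorem insert_symmDiff_of_notMem (ht : a ∉ t) :
    symmDiff (insert a s) t = insert a (symmDiff s t) := by
  ext x
  by_cases hx : x = a
  · subst hx
    simp [mem_symmDiff, ht]
  · simp [mem_symmDiff, hx]

theorem insert_symmDiff_insert (hs : a ∉ s) (ht : a ∉ t) :
    symmDiff (insert a s) (insert a t) = symmDiff s t := by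
  ext x
  by_cases hx : x = a
  · subst hx
    simp [mem_symmDiff, hs, ht]
  · simp [mem_symmDiff, hx]

theorem sum_pow_eq_sum_range_card_filter_mul_pow {ι R : Type*} [CommSemiring R] (s : Finset ι)
    (f : ι → ℕ) (x : R) {n : ℕ} (hf : ∀ i ∈ s, f i ≤ n) :
    ∑ i ∈ s, x ^ f i = ∑ k ∈ range (n + 1), (#(s.filter (f · = k)) : R) * x ^ k := by
  rw [← sum_fiberwise_of_maps_to (t := range (n + 1)) fun i hi => mem_range_succ_iff.mpr (hf i hi)]
  refine sum_congr rfl fun k _ => ?_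
  rw [sum_congr rfl fun i hi => by rw [(mem_filter.mp hi).2], sum_const, nsmul_eq_mul]

end Finset

namespace SnakeGraph

variable {G : SnakeGraph}

theorem mem_verts_of_mem_edges {e : GE} {v : GV} (he : e ∈ G.edges) (hv : v ∈ e) :
    v ∈ G.verts := by
  simp only [edges, verts, mem_biUnion] at he ⊢
  obtain ⟨i, hi, he⟩ := he
  refine ⟨i, hi, ?_⟩
  simp only [tileEdges, tileVerts, mem_insert, mem_singleton] at he ⊢
  rcases he with rfl | rfl | rfl | rfl <;>
    simp only [south, north, west, east, Sym2.mem_iff] at hv <;> tauto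

theorem mem_matchings {P : Finset GE} : P ∈ G.matchings ↔ G.IsPerfectMatching P := by
  rw [matchings, mem_filter, mem_powerset]
  exact ⟨And.right, fun hP => ⟨hP.1, hP⟩⟩

theorem IsPerfectMatching.eq_of_mem_s15 {P : Finset GE} (hP : G.IsPerfectMatching P) {e f : GE}
    {v : GV} (he : e ∈ P) (hf : f ∈ P) (hve : v ∈ e) (hvf : v ∈ f) : e = f :=
  (hP.2 v (mem_verts_of_mem_edges (hP.1 he) hve)).unique ⟨he, hve⟩ ⟨hf, hvf⟩

theorem IsPerfectMatching.eq_of_subset {M P : Finset GE} (hM : G.IsPerfectMatching M)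
    (hP : G.IsPerfectMatching P) (h : M ⊆ P) : M = P := by
  refine h.antisymm fun e he => ?_
  induction e using Sym2.ind with
  | _ v w =>
    have hv : v ∈ G.verts := mem_verts_of_mem_edges (hP.1 he) (Sym2.mem_mk_left v w)
    obtain ⟨f, ⟨hfM, hvf⟩, -⟩ := hM.2 v hv
    rwa [hP.eq_of_mem_s15 he (h hfM) (Sym2.mem_mk_left v w) hvf]

theorem rank_le (Q P : Finset GE) : G.rank Q P ≤ G.d :=
  (card_filter_le _ _).trans (card_range _).le

end SnakeGraph

namespace StraightSnake

def vEdge (k : ℕ) : GE := s(((k : ℤ), (0 : ℤ)), ((k : ℤ), (1 : ℤ)))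

theorem hEdge_inj {a a' j j' : ℤ} : hEdge a j = hEdge a' j' ↔ a = a' ∧ j = j' := by
  simp only [hEdge, Sym2.eq_iff, Prod.ext_iff]
  omega

theorem hEdge_ne_vEdge {a j : ℤ} {k : ℕ} : hEdge a j ≠ vEdge k := by
  simp only [hEdge, vEdge, ne_eq, Sym2.eq_iff, Prod.ext_iff]
  omega

theorem mk_mem_hEdge {k i : ℕ} {r j : ℤ} :
    ((k : ℤ), r) ∈ hEdge i j ↔ r = j ∧ (k = i ∨ k = i + 1) := by
  simp only [hEdge, Sym2.mem_iff, Prod.ext_iff]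
  omega

theorem mk_mem_vEdge {k m : ℕ} {r : ℤ} : ((k : ℤ), r) ∈ vEdge m ↔ k = m ∧ (r = 0 ∨ r = 1) := by
  simp only [vEdge, Sym2.mem_iff, Prod.ext_iff, Nat.cast_inj, ← and_or_left]

theorem tileEdges_natCast (i : ℕ) :
    tileEdges ((i : ℤ), 0) = {hEdge i 0, hEdge i 1, vEdge i, vEdge (i + 1)} := by
  simp [tileEdges, south, north, west, east, hEdge, vEdge]

theorem tileVerts_natCast (i : ℕ) :
    tileVerts ((i : ℤ), 0) =
      {((i : ℤ), 0), (((i + 1 : ℕ) : ℤ), 0), ((i : ℤ), 1), (((i + 1 : ℕ) : ℤ), 1)} := by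
  simp [tileVerts]

variable {d : ℕ} {hd : 1 ≤ d}

theorem mem_edges_iff {e : GE} : e ∈ (straightSnake d hd).edges ↔
    (∃ i < d, ∃ j : ℤ, (j = 0 ∨ j = 1) ∧ e = hEdge i j) ∨ ∃ k ≤ d, e = vEdge k := by
  simp only [SnakeGraph.edges, straightSnake, mem_biUnion, mem_range, tileEdges_natCast,
    mem_insert, mem_singleton]
  constructor
  · rintro ⟨i, hi, h | h | h | h⟩
    exacts [Or.inl ⟨i, hi, 0, by simp, h⟩, Or.inl ⟨i, hi, 1, by simp, h⟩, Or.inr ⟨i, hi.le, h⟩,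
      Or.inr ⟨i + 1, hi, h⟩]
  · rintro (⟨i, hi, j, rfl | rfl, rfl⟩ | ⟨k, hk, rfl⟩)
    · exact ⟨i, hi, by simp⟩
    · exact ⟨i, hi, by simp⟩
    · rcases hk.lt_or_eq with hk | rfl
      · exact ⟨k, hk, by simp⟩
      · exact ⟨k - 1, by omega, by simp [show k - 1 + 1 = k by omega]⟩

theorem mem_verts_iff {v : GV} : v ∈ (straightSnake d hd).verts ↔
    ∃ k ≤ d, ∃ r : ℤ, (r = 0 ∨ r = 1) ∧ v = ((k : ℤ), r) := by
  simp only [SnakeGraph.verts, straightSnake, mem_biUnion, mem_range, tileVerts_natCast,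
    mem_insert, mem_singleton]
  constructor
  · rintro ⟨i, hi, h | h | h | h⟩
    exacts [⟨i, hi.le, 0, by simp, h⟩, ⟨i + 1, hi, 0, by simp, h⟩, ⟨i, hi.le, 1, by simp, h⟩,
      ⟨i + 1, hi, 1, by simp, h⟩]
  · rintro ⟨k, hk, r, rfl | rfl, rfl⟩ <;> rcases hk.lt_or_eq with hk | rfl
    · exact ⟨k, hk, by simp⟩
    · exact ⟨k - 1, by omega, by simp [show k - 1 + 1 = k by omega]⟩
    · exact ⟨k, hk, by simp⟩
    · exact ⟨k - 1, by omega, by simp [show k - 1 + 1 = k by omega]⟩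

theorem lt_of_hEdge_mem_edges {i : ℕ} {r : ℤ} (h : hEdge i r ∈ (straightSnake d hd).edges) :
    i < d := by
  obtain ⟨i', hi', j, -, h⟩ | ⟨k, -, h⟩ := mem_edges_iff.mp h
  · rw [hEdge_inj, Nat.cast_inj] at h
    exact h.1 ▸ hi'
  · exact absurd h hEdge_ne_vEdge

def dominoSets (m : ℕ) : Finset (Finset ℕ) :=
  (range m).powerset.filter fun D => ∀ i ∈ D, i + 1 ∉ D

theorem mem_dominoSets {m : ℕ} {D : Finset ℕ} :
    D ∈ dominoSets m ↔ ∀ i ∈ D, i < m ∧ i + 1 ∉ D := by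
  simp only [dominoSets, mem_filter, mem_powerset, subset_iff, mem_range]
  exact ⟨fun h i hi => ⟨h.1 hi, h.2 i hi⟩,
    fun h => ⟨fun i hi => (h i hi).1, fun i hi => (h i hi).2⟩⟩

def dominoSet (d : ℕ) (P : Finset GE) : Finset ℕ := (range d).filter fun i => hEdge i 0 ∈ P

-- At `k = 0` the truncated `k - 1 = 0` makes the condition `k - 1 ∉ D` redundant.
def dominoMatching (d : ℕ) (D : Finset ℕ) : Finset GE :=
  D.image (fun i : ℕ => hEdge i 0) ∪ D.image (fun i : ℕ => hEdge i 1) ∪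
    ((range (d + 1)).filter fun k => k ∉ D ∧ k - 1 ∉ D).image vEdge

theorem mem_dominoMatching {D : Finset ℕ} {e : GE} : e ∈ dominoMatching d D ↔
    (∃ i ∈ D, ∃ j : ℤ, (j = 0 ∨ j = 1) ∧ e = hEdge i j) ∨
      ∃ k ≤ d, k ∉ D ∧ k - 1 ∉ D ∧ e = vEdge k := by
  simp only [dominoMatching, mem_union, mem_image, mem_filter, mem_range, Nat.lt_succ_iff]
  constructor
  · rintro ((⟨i, hi, rfl⟩ | ⟨i, hi, rfl⟩) | ⟨k, ⟨hk, hk', hk''⟩, rfl⟩)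
    exacts [.inl ⟨i, hi, 0, by simp, rfl⟩, .inl ⟨i, hi, 1, by simp, rfl⟩,
      .inr ⟨k, hk, hk', hk'', rfl⟩]
  · rintro (⟨i, hi, j, rfl | rfl, rfl⟩ | ⟨k, hk, hk', hk'', rfl⟩)
    exacts [.inl (.inl ⟨i, hi, rfl⟩), .inl (.inr ⟨i, hi, rfl⟩), .inr ⟨k, ⟨hk, hk', hk''⟩, rfl⟩]

theorem dominoMatching_subset_edges {D : Finset ℕ} (hD : D ∈ dominoSets d) :
    dominoMatching d D ⊆ (straightSnake d hd).edges := by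
  intro e he
  rw [mem_edges_iff]
  obtain ⟨i, hi, j, hj, rfl⟩ | ⟨k, hk, -, -, rfl⟩ := mem_dominoMatching.mp he
  exacts [.inl ⟨i, (mem_dominoSets.mp hD i hi).1, j, hj, rfl⟩, .inr ⟨k, hk, rfl⟩]

theorem mem_dominoMatching_and_mk_mem_iff {D : Finset ℕ} (hD : D ∈ dominoSets d) {k : ℕ}
    {r : ℤ} (hk : k ≤ d) (hr : r = 0 ∨ r = 1) {e : GE} :
    e ∈ dominoMatching d D ∧ ((k : ℤ), r) ∈ e ↔
      e = if k ∈ D then hEdge k r else if k - 1 ∈ D then hEdge (k - 1 : ℕ) r else vEdge k := by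
  have hD' := mem_dominoSets.mp hD
  constructor
  · rintro ⟨he, hv⟩
    obtain ⟨i, hi, j, -, rfl⟩ | ⟨m, -, hm, hm', rfl⟩ := mem_dominoMatching.mp he
    · obtain ⟨rfl, rfl | rfl⟩ := mk_mem_hEdge.mp hv
      · simp [hi]
      · simp [hi, (hD' i hi).2]
    · obtain ⟨rfl, -⟩ := mk_mem_vEdge.mp hv
      simp [hm, hm']
  · rintro rfl
    split_ifs with h h'
    · exact ⟨mem_dominoMatching.mpr (.inl ⟨k, h, r, hr, rfl⟩), mk_mem_hEdge.mpr ⟨rfl, .inl rfl⟩⟩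
    · refine ⟨mem_dominoMatching.mpr (.inl ⟨k - 1, h', r, hr, rfl⟩),
        mk_mem_hEdge.mpr ⟨rfl, .inr ?_⟩⟩
      rcases k with _ | k
      · exact absurd h' h
      · simp
    · exact ⟨mem_dominoMatching.mpr (.inr ⟨k, hk, h, h', rfl⟩), mk_mem_vEdge.mpr ⟨rfl, hr⟩⟩

theorem isPerfectMatching_dominoMatching {D : Finset ℕ} (hD : D ∈ dominoSets d) :
    (straightSnake d hd).IsPerfectMatching (dominoMatching d D) := by
  refine ⟨dominoMatching_subset_edges hD, fun v hv => ?_⟩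
  obtain ⟨k, hk, r, hr, rfl⟩ := mem_verts_iff.mp hv
  exact ⟨_, (mem_dominoMatching_and_mk_mem_iff hD hk hr).mpr rfl,
    fun e he => (mem_dominoMatching_and_mk_mem_iff hD hk hr).mp he⟩

theorem dominoSet_dominoMatching {D : Finset ℕ} (hD : D ∈ dominoSets d) :
    dominoSet d (dominoMatching d D) = D := by
  ext i
  simp only [dominoSet, mem_filter, mem_range, mem_dominoMatching, hEdge_inj, Nat.cast_inj,
    hEdge_ne_vEdge, and_false, exists_false, or_false]
  constructor
  · rintro ⟨-, i', hi', j, -, rfl, -⟩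
    exact hi'
  · exact fun hi => ⟨(mem_dominoSets.mp hD i hi).1, i, hi, 0, by simp⟩

section PerfectMatching

variable {P : Finset GE} (hP : (straightSnake d hd).IsPerfectMatching P)
include hP

theorem vEdge_mem_or_hEdge_mem {k : ℕ} {r : ℤ} (hk : k ≤ d) (hr : r = 0 ∨ r = 1) :
    vEdge k ∈ P ∨ hEdge k r ∈ P ∨ ∃ j, j + 1 = k ∧ hEdge j r ∈ P := by
  obtain ⟨e, ⟨he, hve⟩, -⟩ := hP.2 _ (mem_verts_iff.mpr ⟨k, hk, r, hr, rfl⟩)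
  obtain ⟨i, -, j, -, rfl⟩ | ⟨m, -, rfl⟩ := mem_edges_iff.mp (hP.1 he)
  · obtain ⟨rfl, rfl | rfl⟩ := mk_mem_hEdge.mp hve
    exacts [Or.inr (Or.inl he), Or.inr (Or.inr ⟨i, rfl, he⟩)]
  · obtain ⟨rfl, -⟩ := mk_mem_vEdge.mp hve
    exact Or.inl he

theorem hEdge_mem_of_hEdge_mem {i : ℕ} {r r' : ℤ} (hr : r = 0 ∨ r = 1)
    (hr' : r' = 0 ∨ r' = 1) (h : hEdge i r ∈ P) : hEdge i r' ∈ P := by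
  induction i using Nat.strong_induction_on generalizing r r' with
  | _ i ih =>
    -- Covering `(i, r')` by `vEdge i` or by `hEdge (i - 1) r'` would meet `hEdge i r` at `(i, r)`,
    -- in the second case after the induction hypothesis moves that edge to row `r`.
    have hi : i < d := lt_of_hEdge_mem_edges (hP.1 h)
    rcases vEdge_mem_or_hEdge_mem hP hi.le hr' with hv | hh | ⟨j, rfl, hj⟩
    · have := hP.eq_of_mem_s15 h hv (mk_mem_hEdge.mpr ⟨rfl, .inl rfl⟩) (mk_mem_vEdge.mpr ⟨rfl, hr⟩)
      exact absurd this hEdge_ne_vEdge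
    · exact hh
    · have := hP.eq_of_mem_s15 h (ih j (by omega) hr' hr hj) (mk_mem_hEdge.mpr ⟨rfl, .inl rfl⟩)
        (mk_mem_hEdge.mpr ⟨rfl, .inr rfl⟩)
      simp [hEdge_inj] at this

theorem dominoSet_mem_dominoSets : dominoSet d P ∈ dominoSets d := by
  refine mem_dominoSets.mpr fun i hi => ?_
  simp only [dominoSet, mem_filter, mem_range] at hi ⊢
  refine ⟨hi.1, fun hi' => ?_⟩
  have := hP.eq_of_mem_s15 hi.2 hi'.2 (mk_mem_hEdge.mpr ⟨rfl, .inr rfl⟩)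
    (mk_mem_hEdge.mpr ⟨rfl, .inl (by push_cast; rfl)⟩)
  simp [hEdge_inj] at this

theorem dominoMatching_dominoSet : dominoMatching d (dominoSet d P) = P := by
  refine (isPerfectMatching_dominoMatching (dominoSet_mem_dominoSets hP)).eq_of_subset hP ?_
  intro e he
  obtain ⟨i, hi, j, hj, rfl⟩ | ⟨k, hk, hk', hk'', rfl⟩ := mem_dominoMatching.mp he
  · exact hEdge_mem_of_hEdge_mem hP (.inl rfl) hj (mem_filter.mp hi).2
  · obtain hv | hh | ⟨j, rfl, hj⟩ := vEdge_mem_or_hEdge_mem hP hk (r := 0) (.inl rfl)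
    · exact hv
    · exact absurd (mem_filter.mpr ⟨mem_range.mpr (lt_of_hEdge_mem_edges (hP.1 hh)), hh⟩) hk'
    · exact absurd (mem_filter.mpr ⟨mem_range.mpr (lt_of_hEdge_mem_edges (hP.1 hj)), hj⟩) hk''

end PerfectMatching

section Rank

variable {P Q : Finset GE} (hP : P ⊆ (straightSnake d hd).edges)
  (hQ : Q ⊆ (straightSnake d hd).edges)
include hP hQ

theorem encl_iff (i : ℕ) : (straightSnake d hd).encl P Q i ↔ hEdge i 0 ∈ symmDiff P Q := by
  have below : ∀ e ∈ symmDiff P Q, (∃ j : ℤ, j ≤ 0 ∧ e = hEdge i j) ↔ e = hEdge i 0 := by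
    intro e he
    have he' : e ∈ (straightSnake d hd).edges := by
      rcases mem_symmDiff.mp he with ⟨h, -⟩ | ⟨h, -⟩
      exacts [hP h, hQ h]
    obtain ⟨i', -, j, hj, rfl⟩ | ⟨k, -, rfl⟩ := mem_edges_iff.mp he'
    · simp only [hEdge_inj]
      exact ⟨fun ⟨j', hj', h, hjj'⟩ => ⟨h, by omega⟩, fun ⟨h, hj0⟩ => ⟨0, le_rfl, h, hj0⟩⟩
    · simp [hEdge_ne_vEdge.symm]
  rw [SnakeGraph.encl, show (straightSnake d hd).pos i = ((i : ℤ), 0) from rfl,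
    filter_congr below, filter_eq']
  split_ifs <;> simp [*]

theorem rank_eq_card_symmDiff :
    (straightSnake d hd).rank Q P = #(symmDiff (dominoSet d P) (dominoSet d Q)) := by
  rw [SnakeGraph.rank]
  congr 1
  ext i
  simp only [mem_filter, encl_iff hP hQ, dominoSet, mem_symmDiff, mem_range]
  exact ⟨by tauto, by tauto⟩

end Rank

def odds (m : ℕ) : Finset ℕ := (range m).filter Odd

theorem eq_odds_of_mem_dominoSets {m : ℕ} {D : Finset ℕ} (hD : D ∈ dominoSets m) (h0 : 0 ∉ D)
    (hcover : ∀ i, i + 1 < m → i ∈ D ∨ i + 1 ∈ D) : D = odds m := by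
  have hD' := mem_dominoSets.mp hD
  have parity : ∀ i < m, (i ∈ D ↔ Odd i) := by
    intro i hi
    induction i with
    | zero => simp [h0]
    | succ i ih =>
      have := hcover i hi
      have := hD' i
      rw [Nat.odd_add_one, ← ih (by omega)]
      tauto
  ext i
  simp only [odds, mem_filter, mem_range]
  exact ⟨fun hi => ⟨(hD' i hi).1, (parity i (hD' i hi).1).mp hi⟩,
    fun hi => (parity i hi.1).mpr hi.2⟩

theorem vEdge_mem_interiorEdges {k : ℕ} (hk0 : 0 < k) (hkd : k < d) :
    vEdge k ∈ (straightSnake d hd).interiorEdges := by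
  refine mem_filter.mpr ⟨mem_edges_iff.mpr (.inr ⟨k, hkd.le, rfl⟩),
    k - 1, show k - 1 < d by omega, k, hkd, by omega, ?_, ?_⟩
  · simp [straightSnake, tileEdges_natCast, show k - 1 + 1 = k by omega]
  · simp [straightSnake, tileEdges_natCast]

theorem dominoSet_eq_odds {P : Finset GE} (hP : (straightSnake d hd).IsPerfectMatching P)
    (hPb : P ⊆ (straightSnake d hd).boundaryEdges) (hw : vEdge 0 ∈ P) :
    dominoSet d P = odds d := by
  refine eq_odds_of_mem_dominoSets (dominoSet_mem_dominoSets hP) (fun h0 => ?_) fun i hi => ?_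
  · have := hP.eq_of_mem_s15 (mem_filter.mp h0).2 hw (mk_mem_hEdge.mpr ⟨rfl, .inl rfl⟩)
      (mk_mem_vEdge.mpr ⟨rfl, .inl rfl⟩)
    exact hEdge_ne_vEdge this
  · have hv : vEdge (i + 1) ∉ P := fun hv =>
      (mem_sdiff.mp (hPb hv)).2 (vEdge_mem_interiorEdges i.succ_pos hi)
    simp only [dominoSet, mem_filter, mem_range]
    obtain hv' | hh | ⟨j, hj, hh⟩ := vEdge_mem_or_hEdge_mem hP hi.le (r := 0) (.inl rfl)
    · exact absurd hv' hv
    · exact .inr ⟨hi, hh⟩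
    · obtain rfl : j = i := by omega
      exact .inl ⟨by omega, hh⟩

theorem odds_succ (m : ℕ) : odds (m + 1) = if Odd m then insert m (odds m) else odds m := by
  rw [odds, range_add_one, filter_insert]
  rfl

theorem self_notMem_odds (m : ℕ) : m ∉ odds m := by
  simp [odds]

theorem card_symmDiff_odds_succ {m : ℕ} {D : Finset ℕ} (hm : m ∉ D) :
    #(symmDiff D (odds (m + 1))) = #(symmDiff D (odds m)) + if Odd m then 1 else 0 := by
  rw [odds_succ]
  split_ifs
  · rw [symmDiff_comm, insert_symmDiff_of_notMem hm, card_insert_of_notMem, symmDiff_comm]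
    simp [mem_symmDiff, hm, self_notMem_odds]
  · rfl

theorem card_insert_symmDiff_odds_succ {m : ℕ} {D : Finset ℕ} (hm : m ∉ D) :
    #(symmDiff (insert m D) (odds (m + 1))) = #(symmDiff D (odds m)) + if Odd m then 0 else 1 := by
  rw [odds_succ]
  split_ifs
  · rw [insert_symmDiff_insert hm (self_notMem_odds m), add_zero]
  · rw [insert_symmDiff_of_notMem (self_notMem_odds m), card_insert_of_notMem]
    simp [mem_symmDiff, hm, self_notMem_odds]

theorem notMem_of_mem_dominoSets {m k : ℕ} {D : Finset ℕ} (hD : D ∈ dominoSets m) (hk : m ≤ k) :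
    k ∉ D := fun h => by
  have := mem_dominoSets.mp hD k h
  omega

theorem sum_dominoSets_add_two {M : Type*} [AddCommMonoid M] (f : Finset ℕ → M) (n : ℕ) :
    ∑ D ∈ dominoSets (n + 2), f D =
      ∑ D ∈ dominoSets (n + 1), f D + ∑ D ∈ dominoSets n, f (insert (n + 1) D) := by
  rw [← sum_filter_not_add_sum_filter _ (fun D => n + 1 ∈ D)]
  congr 1
  · refine sum_congr (ext fun D => ?_) fun _ _ => rfl
    simp only [mem_filter, mem_dominoSets]
    grind
  · refine sum_nbij' (erase · (n + 1)) (insert (n + 1)) (fun D hD => ?_) (fun D hD => ?_)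
      (fun D hD => insert_erase (mem_filter.mp hD).2)
      (fun D hD => erase_insert (notMem_of_mem_dominoSets hD n.le_succ))
      fun D hD => by rw [insert_erase (mem_filter.mp hD).2]
    · simp only [mem_filter, mem_dominoSets, mem_erase] at hD ⊢
      grind
    · simp only [mem_filter, mem_dominoSets, mem_insert] at hD ⊢
      grind

theorem sum_dominoSets_X_pow (m : ℕ) :
    ∑ D ∈ dominoSets m, (X : ℤ[X]) ^ #(symmDiff D (odds m)) = fpoly m := by
  induction m using fpoly.induct with
  | case1 => simp [dominoSets, odds, fpoly, sum_filter]
  | case2 =>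
    rw [dominoSets, range_one, sum_filter, show ({0} : Finset ℕ).powerset = {∅, {0}} by decide]
    simp [odds, filter_singleton, fpoly, add_comm,
      show symmDiff ({0} : Finset ℕ) ∅ = {0} from symmDiff_bot _]
  | case3 n hn ih₁ ih₀ | case4 n hn ih₁ ih₀ =>
    have weight₁ : ∀ D ∈ dominoSets (n + 1), (X : ℤ[X]) ^ #(symmDiff D (odds (n + 2))) =
        X ^ (if Odd (n + 1) then 1 else 0) * X ^ #(symmDiff D (odds (n + 1))) := fun D hD => by
      rw [card_symmDiff_odds_succ (notMem_of_mem_dominoSets hD le_rfl), pow_add, mul_comm]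
    have weight₀ : ∀ D ∈ dominoSets n,
        (X : ℤ[X]) ^ #(symmDiff (insert (n + 1) D) (odds (n + 2))) =
          X ^ ((if Odd (n + 1) then 0 else 1) + if Odd n then 1 else 0) *
            X ^ #(symmDiff D (odds n)) := fun D hD => by
      rw [card_insert_symmDiff_odds_succ (notMem_of_mem_dominoSets hD n.le_succ),
        card_symmDiff_odds_succ (notMem_of_mem_dominoSets hD le_rfl), pow_add, pow_add, pow_add]
      ring
    rw [sum_dominoSets_add_two, sum_congr rfl weight₁, sum_congr rfl weight₀, ← mul_sum,
      ← mul_sum, ih₁, ih₀, fpoly]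
    have hodd₁ : Odd (n + 1) ↔ (n + 2) % 2 = 0 := by rw [Nat.odd_iff]; omega
    have hodd₀ : Odd n ↔ (n + 2) % 2 ≠ 0 := by rw [Nat.odd_iff]; omega
    simp only [hodd₁, hodd₀]
    split_ifs <;> first | omega | ring

theorem fpoly_eval_one (m : ℕ) : (fpoly m).eval 1 = Nat.fib (m + 2) := by
  induction m using fpoly.induct with
  | case1 => simp [fpoly]
  | case2 => simp [fpoly, Nat.fib_add_two]
  | case3 n hn ih₁ ih₀ | case4 n hn ih₁ ih₀ =>
    rw [fpoly, Nat.fib_add_two, Nat.cast_add, ← ih₁, ← ih₀]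
    split_ifs
    simp [add_comm]

end StraightSnake

open StraightSnake

/-- `f_d` is the rank generating function of the lattice of
perfect matchings of the straight snake graph with `d` tiles whose first
interior edge has sign `+` (equivalently, whose minimal matching `Pm`
contains the west edge of the first tile); in particular `f_d(1) = fib (d+2)`. -/
theorem straight_rank_generating_function (d : ℕ) (hd : 1 ≤ d)
    (Pm : Finset GE) (hPm : (straightSnake d hd).IsPerfectMatching Pm)
    (hPmb : Pm ⊆ (straightSnake d hd).boundaryEdges)
    (hw : west ((0 : ℤ), (0 : ℤ)) ∈ Pm) :
    (fpoly d = ∑ i ∈ Finset.range (d + 1),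
        (((straightSnake d hd).matchings.filter
            fun P => (straightSnake d hd).rank Pm P = i).card : Polynomial ℤ) *
          Polynomial.X ^ i) ∧
    (fpoly d).eval 1 = (Nat.fib (d + 2) : ℤ) := by
  refine ⟨?_, fpoly_eval_one d⟩
  have hPmD : dominoSet d Pm = odds d :=
    dominoSet_eq_odds hPm hPmb (by simpa [west, vEdge] using hw)
  rw [← sum_pow_eq_sum_range_card_filter_mul_pow (n := d) _ _ _ fun P _ => SnakeGraph.rank_le Pm P,
    ← sum_dominoSets_X_pow]
  refine sum_nbij' (dominoMatching d) (dominoSet d)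
    (fun D hD => SnakeGraph.mem_matchings.mpr (isPerfectMatching_dominoMatching hD))
    (fun P hP => dominoSet_mem_dominoSets (SnakeGraph.mem_matchings.mp hP))
    (fun D hD => dominoSet_dominoMatching hD)
    (fun P hP => dominoMatching_dominoSet (SnakeGraph.mem_matchings.mp hP)) fun D hD => ?_
  rw [rank_eq_card_symmDiff (dominoMatching_subset_edges hD) hPm.1, dominoSet_dominoMatching hD,
    hPmD]
end
end
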